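/- In the Heisenberg group ℍ₃ (matrix A = J, single singular value α = 1), the Jacobian determinant of the sub-Riemannian exponential map at (u, λ) with λ ≠ 0 equals −‖u‖²(λ sin λ + 2 cos λ − 2)/λ⁴; in particular it vanishes if and only if u = 0, or λ ∈ 2πℤ∖{0}, or tan(λ/2) = λ/2. -/

import Mathlib

/-!
For any map `(u, λ) ↦ ((a(λ) + b(λ) J) u, g(λ) ‖u‖²)` on `ℝ² × ℝ` the Jacobian determinant is
`‖u‖² (h g' - g h')` with `h = a² + b² = det (a + b J)`: expanding the block matrix, the cross
term only sees `uᵀ (a + b J)⁻¹ (a' + b' J) u`, in which the skew part `J` drops out. For the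
Heisenberg coefficients `a = sin λ / λ`, `b = (cos λ - 1) / λ`, `g = (λ - sin λ) / (2 λ²)` one has
`h = 2 (1 - cos λ) / λ²`, and `h g' - g h'` simplifies to `-(λ sin λ + 2 cos λ - 2) / λ⁴`.
The zero set then follows from the half-angle factorization
`λ sin λ + 2 cos λ - 2 = 4 sin (λ/2) ((λ/2) cos (λ/2) - sin (λ/2))`.
-/

/-- The sub-Riemannian exponential map of the Heisenberg group `ℍ₃`, in coordinates
`v = (u₁, u₂, λ)`. -/
noncomputable def heisExp (v : Fin 3 → ℝ) : Fin 3 → ℝ :=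
  ![ (Real.sin (v 2) / v 2) * v 0 + ((Real.cos (v 2) - 1) / v 2) * v 1,
     -((Real.cos (v 2) - 1) / v 2) * v 0 + (Real.sin (v 2) / v 2) * v 1,
     ((v 2 - Real.sin (v 2)) / (2 * (v 2) ^ 2)) * ((v 0) ^ 2 + (v 1) ^ 2) ]

open Real

namespace Real

theorem mul_cos_eq_sin_iff_tan_eq (x : ℝ) : x * cos x = sin x ↔ tan x = x := by
  by_cases hc : cos x = 0
  · have hs : sin x ≠ 0 := by
      intro hs
      simpa [hs, hc] using sin_sq_add_cos_sq x
    constructor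
    · intro h
      rw [hc, mul_zero] at h
      exact absurd h.symm hs
    · intro h
      rw [tan_eq_sin_div_cos, hc, div_zero] at h
      simp [← h] at hc
  · rw [tan_eq_sin_div_cos, div_eq_iff hc, eq_comm]

theorem mul_sin_add_two_mul_cos_sub_two_eq (x : ℝ) :
    x * sin x + 2 * cos x - 2 = 4 * sin (x / 2) * (x / 2 * cos (x / 2) - sin (x / 2)) := by
  conv_lhs => rw [← add_halves x, sin_add, cos_add]
  linear_combination 2 * sin_sq_add_cos_sq (x / 2)

theorem sin_half_eq_zero_iff {x : ℝ} (hx : x ≠ 0) :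
    sin (x / 2) = 0 ↔ ∃ k : ℤ, k ≠ 0 ∧ x = 2 * π * k := by
  rw [sin_eq_zero_iff]
  constructor
  · rintro ⟨k, hk⟩
    refine ⟨k, ?_, by linarith⟩
    rintro rfl
    exact hx (by simpa using hk.symm)
  · rintro ⟨k, -, rfl⟩
    exact ⟨k, by ring⟩

theorem mul_sin_add_two_mul_cos_sub_two_eq_zero_iff {x : ℝ} (hx : x ≠ 0) :
    x * sin x + 2 * cos x - 2 = 0 ↔
      (∃ k : ℤ, k ≠ 0 ∧ x = 2 * π * k) ∨ tan (x / 2) = x / 2 := by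
  rw [mul_sin_add_two_mul_cos_sub_two_eq, mul_eq_zero, mul_eq_zero, sub_eq_zero,
    mul_cos_eq_sin_iff_tan_eq, sin_half_eq_zero_iff hx]
  norm_num

end Real

noncomputable def heisExpOf (a b g : ℝ → ℝ) (v : Fin 3 → ℝ) : Fin 3 → ℝ :=
  ![a (v 2) * v 0 + b (v 2) * v 1, -b (v 2) * v 0 + a (v 2) * v 1, g (v 2) * (v 0 ^ 2 + v 1 ^ 2)]

section Jacobian

variable {a b g : ℝ → ℝ} {a' b' g' : ℝ} {v : Fin 3 → ℝ}

theorem hasFDerivAt_heisExpOf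
    (ha : HasDerivAt a a' (v 2)) (hb : HasDerivAt b b' (v 2)) (hg : HasDerivAt g g' (v 2)) :
    HasFDerivAt (heisExpOf a b g)
      (Matrix.toLin' !![a (v 2), b (v 2), a' * v 0 + b' * v 1;
        -b (v 2), a (v 2), -b' * v 0 + a' * v 1;
        2 * g (v 2) * v 0, 2 * g (v 2) * v 1, g' * (v 0 ^ 2 + v 1 ^ 2)]).toContinuousLinearMap
      v := by
  have h₀ := hasFDerivAt_apply (𝕜 := ℝ) 0 v
  have h₁ := hasFDerivAt_apply (𝕜 := ℝ) 1 v
  have h₂ := hasFDerivAt_apply (𝕜 := ℝ) 2 v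
  have ha := ha.comp_hasFDerivAt v h₂
  have hb := hb.comp_hasFDerivAt v h₂
  have hg := hg.comp_hasFDerivAt v h₂
  refine hasFDerivAt_pi'.2 fun i => ?_
  fin_cases i <;> [refine ((ha.mul h₀).add (hb.mul h₁)).congr_fderiv ?_;
    refine ((hb.neg.mul h₀).add (ha.mul h₁)).congr_fderiv ?_;
    refine (hg.mul ((h₀.pow 2).add (h₁.pow 2))).congr_fderiv ?_]
  all_goals
    ext w
    simp only [Fin.isValue, Function.comp_apply, Pi.neg_apply, Pi.add_apply, neg_smul, smul_neg,
      smul_add, Fin.zero_eta, Fin.mk_one, Fin.reduceFinMk, nsmul_eq_mul, Nat.cast_ofNat,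
      add_apply, neg_apply, smul_apply, ContinuousLinearMap.proj_apply, smul_eq_mul,
      ContinuousLinearMap.comp_apply,
      LinearMap.coe_toContinuousLinearMap', Matrix.toLin'_apply, Matrix.cons_mulVec, dotProduct,
      Fin.sum_univ_three, Matrix.cons_val_zero, Matrix.cons_val_one, Matrix.cons_val,
      Matrix.empty_mulVec]
    ring

theorem det_fderiv_heisExpOf
    (ha : HasDerivAt a a' (v 2)) (hb : HasDerivAt b b' (v 2)) (hg : HasDerivAt g g' (v 2)) :
    LinearMap.det (fderiv ℝ (heisExpOf a b g) v).toLinearMap =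
      (v 0 ^ 2 + v 1 ^ 2) *
        ((a (v 2) ^ 2 + b (v 2) ^ 2) * g' - g (v 2) * (2 * (a (v 2) * a' + b (v 2) * b'))) := by
  rw [(hasFDerivAt_heisExpOf ha hb hg).fderiv, LinearMap.coe_toContinuousLinearMap,
    LinearMap.det_toLin', Matrix.det_fin_three]
  simp only [Matrix.of_apply, Matrix.cons_val', Matrix.cons_val_zero, Matrix.cons_val_one,
    Matrix.cons_val, Matrix.cons_val_fin_one]
  ring

end Jacobian

theorem heisExp_eq_heisExpOf : heisExp = heisExpOf (fun l => sin l / l) (fun l => (cos l - 1) / l)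
    (fun l => (l - sin l) / (2 * l ^ 2)) := rfl

theorem det_fderiv_heisExp {v : Fin 3 → ℝ} (hl : v 2 ≠ 0) :
    LinearMap.det (fderiv ℝ heisExp v).toLinearMap =
      -((v 0 ^ 2 + v 1 ^ 2) * (v 2 * sin (v 2) + 2 * cos (v 2) - 2)) / v 2 ^ 4 := by
  have hid := hasDerivAt_id' (v 2)
  have ha : HasDerivAt (fun l => sin l / l) _ (v 2) := (hasDerivAt_sin _).div hid hl
  have hb : HasDerivAt (fun l => (cos l - 1) / l) _ (v 2) :=
    ((hasDerivAt_cos _).sub_const 1).div hid hl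
  have hg : HasDerivAt (fun l => (l - sin l) / (2 * l ^ 2)) _ (v 2) :=
    (hid.sub (hasDerivAt_sin _)).div ((hid.pow 2).const_mul 2) (by positivity)
  rw [heisExp_eq_heisExpOf, det_fderiv_heisExpOf ha hb hg]
  simp only [Pi.sub_apply, Nat.cast_ofNat, Nat.add_one_sub_one, pow_one, mul_one]
  field_simp
  linear_combination (v 0 ^ 2 + v 1 ^ 2) * v 2 * (3 - cos (v 2)) * sin_sq_add_cos_sq (v 2)

theorem heisenberg_jacobian (v : Fin 3 → ℝ) (hl : v 2 ≠ 0) :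
    LinearMap.det ((fderiv ℝ heisExp v).toLinearMap) =
      -(((v 0) ^ 2 + (v 1) ^ 2) *
          (v 2 * Real.sin (v 2) + 2 * Real.cos (v 2) - 2)) / (v 2) ^ 4
    ∧ (LinearMap.det ((fderiv ℝ heisExp v).toLinearMap) = 0 ↔
        (v 0 = 0 ∧ v 1 = 0) ∨ (∃ k : ℤ, k ≠ 0 ∧ v 2 = 2 * Real.pi * k) ∨
          Real.tan (v 2 / 2) = v 2 / 2) := by
  refine ⟨det_fderiv_heisExp hl, ?_⟩
  rw [det_fderiv_heisExp hl, div_eq_zero_iff, neg_eq_zero, mul_eq_zero, sq, sq,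
    mul_self_add_mul_self_eq_zero, mul_sin_add_two_mul_cos_sub_two_eq_zero_iff hl]
  simp [hl]
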